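/- Suppose pr(K) = pr(K_mc), there is no starting error in L(G, γ^N_cons) (i.e. f^N_cons(ε) ≠ ∅), and the measure N_mcmc exists. If N ≥ N_mcmc + 1, then the conservative LLP supervisor is valid: L(G, γ^N_cons) = pr(K↑). -/
import Mathlib


open Set

/-- Prefix closure of a language. -/
def prCl {α : Type*} (L : Set (List α)) : Set (List α) := {s | ∃ t ∈ L, s <+: t}

/-- `M` is controllable w.r.t. the (prefix-closed) language `L` and uncontrollable
events `Suc`: `pr(M)·Σ_uc ∩ L ⊆ pr(M)`. -/
def ctrb {α : Type*} (M L : Set (List α)) (Suc : Set α) : Prop :=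
  ∀ s ∈ prCl M, ∀ σ ∈ Suc, s ++ [σ] ∈ L → s ++ [σ] ∈ prCl M

/-- Supremal controllable sublanguage of `K` w.r.t. `L` and `Suc`:
the union of all controllable sublanguages of `K`. -/
def supC {α : Type*} (K L : Set (List α)) (Suc : Set α) : Set (List α) :=
  ⋃₀ {M | M ⊆ K ∧ ctrb M L Suc}

/-- Post-language of `L` after `s`: `L/s = {t : st ∈ L}`. -/
def postL {α : Type*} (L : Set (List α)) (s : List α) : Set (List α) := {t | s ++ t ∈ L}

/-- Truncation of `L` to strings of length at most `N`. -/
def truncL {α : Type*} (L : Set (List α)) (N : ℕ) : Set (List α) := {t ∈ L | t.length ≤ N}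

/-- Active set of `L` after `s`. -/
def activeSet {α : Type*} (L : Set (List α)) (s : List α) : Set α := {σ | s ++ [σ] ∈ L}

/-- The closed-loop language `L(G,γ)`, defined inductively:
`ε ∈ L(G,γ)`, and `sσ ∈ L(G,γ)` iff `s ∈ L(G,γ)`, `sσ ∈ L(G)` and `σ ∈ γ(s)`. -/
inductive InLoop {α : Type*} (L : Set (List α)) (γ : List α → Set α) : List α → Prop
  | nil : InLoop L γ []
  | snoc {s : List α} {σ : α} : InLoop L γ s → (s ++ [σ]) ∈ L → σ ∈ γ s →
      InLoop L γ (s ++ [σ])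

/-- The closed-loop language as a set. -/
def loopLang {α : Type*} (L : Set (List α)) (γ : List α → Set α) : Set (List α) :=
  {s | InLoop L γ s}

/-- The `N`-step conservative LLP decision
`f^N_cons(s) = (K/s|_{N-1})^{↑/s|_N}`. -/
def fCons {α : Type*} (K L : Set (List α)) (Suc : Set α) (N : ℕ) (s : List α) :
    Set (List α) :=
  supC (truncL (postL K s) (N - 1)) (truncL (postL L s) N) Suc

/-- The `N`-step optimistic LLP decision
`f^N_optm(s) = (K/s|_N ∪ (pr(K)/s|_N \ pr(K)/s|_{N-1}))^{↑/s|_N}`. -/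
def fOptm {α : Type*} (K L : Set (List α)) (Suc : Set α) (N : ℕ) (s : List α) :
    Set (List α) :=
  supC (truncL (postL K s) N ∪
        (truncL (postL (prCl K) s) N \ truncL (postL (prCl K) s) (N - 1)))
       (truncL (postL L s) N) Suc

/-- The LLP control policy `γ(s) = pr(f(s))|_1 ∪ (Σ_uc ∩ Σ_{L(G)}(s))`,
viewed as the set of enabled events. -/
def policy {α : Type*} (f : List α → Set (List α)) (L : Set (List α)) (Suc : Set α)
    (s : List α) : Set α :=
  {σ | [σ] ∈ prCl (f s)} ∪ (Suc ∩ activeSet L s)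

/-- The conservative LLP control policy `γ^N_cons`. -/
def γCons {α : Type*} (K L : Set (List α)) (Suc : Set α) (N : ℕ) : List α → Set α :=
  policy (fCons K L Suc N) L Suc

/-- The optimistic LLP control policy `γ^N_optm`. -/
def γOptm {α : Type*} (K L : Set (List α)) (Suc : Set α) (N : ℕ) : List α → Set α :=
  policy (fOptm K L Suc N) L Suc

/-- `L_c(G)`: traces of the plant after which only controllable events are possible. -/
def LcG {α : Type*} (L : Set (List α)) (Suc : Set α) : Set (List α) :=
  {s ∈ L | ∀ σ ∈ Suc, s ++ [σ] ∉ L}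

/-- `K_mc`: legal, marked, controllable traces. -/
def Kmc {α : Type*} (K L : Set (List α)) (Suc : Set α) : Set (List α) :=
  K ∩ LcG L Suc

/-- `K_fc̄`: uncontrollably crossing traces. -/
def Kfc {α : Type*} (K L : Set (List α)) (Suc : Set α) : Set (List α) :=
  {s ∈ prCl K | ∃ σ ∈ Suc, s ++ [σ] ∈ L ∧ s ++ [σ] ∉ prCl K}

/-- The set of lengths whose greatest element (when it exists) is `N_mcmc`. -/
def NmcmcSet {α : Type*} (K L : Set (List α)) (Suc : Set α) : Set ℕ :=
  {n | ∃ t : List α, t.length = n ∧ ∃ s ∈ Kmc K L Suc ∪ {([] : List α)},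
      s ++ t ∈ Kmc K L Suc ∧
      ∀ v : List α, v <+: t → v ≠ [] → v ≠ t → s ++ v ∉ Kmc K L Suc}

section LLPAux

variable {α : Type*}

lemma prCl_mono {A B : Set (List α)} (h : A ⊆ B) : prCl A ⊆ prCl B := by
  rintro s ⟨t, ht, hp⟩; exact ⟨t, h ht, hp⟩

lemma mem_prCl_self {A : Set (List α)} {s : List α} (h : s ∈ A) : s ∈ prCl A :=
  ⟨s, h, List.prefix_refl s⟩

lemma prCl_prefix {A : Set (List α)} {s t : List α} (ht : t ∈ prCl A) (hp : s <+: t) :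
    s ∈ prCl A := by
  obtain ⟨z, hz, hpz⟩ := ht
  exact ⟨z, hz, hp.trans hpz⟩

lemma supC_subset {K L : Set (List α)} {Suc : Set α} : supC K L Suc ⊆ K := by
  rintro t ⟨M, ⟨hMK, -⟩, htM⟩; exact hMK htM

lemma subset_supC {M K L : Set (List α)} {Suc : Set α} (h1 : M ⊆ K) (h2 : ctrb M L Suc) :
    M ⊆ supC K L Suc := fun t ht => ⟨M, ⟨h1, h2⟩, ht⟩

lemma supC_ctrb {K L : Set (List α)} {Suc : Set α} : ctrb (supC K L Suc) L Suc := by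
  rintro s ⟨t, ⟨M, hM, htM⟩, hst⟩ σ hσ hsL
  have h1 : s ++ [σ] ∈ prCl M := hM.2 s ⟨t, htM, hst⟩ σ hσ hsL
  exact prCl_mono (subset_supC hM.1 hM.2) h1

lemma exists_minLen {S : Set (List α)} (h : S.Nonempty) :
    ∃ r ∈ S, ∀ r' ∈ S, r.length ≤ r'.length := by
  classical
  obtain ⟨r0, hr0⟩ := h
  have hex : ∃ k, ∃ r, r ∈ S ∧ r.length = k := ⟨r0.length, r0, hr0, rfl⟩
  obtain ⟨r, hrS, hrn⟩ := Nat.find_spec hex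
  exact ⟨r, hrS, fun r' hr' => by rw [hrn]; exact Nat.find_min' hex ⟨r', hr', rfl⟩⟩

lemma prefix_cancel {s u t : List α} (h : s ++ u <+: s ++ t) : u <+: t := by
  obtain ⟨e, he⟩ := h
  rw [List.append_assoc] at he
  exact ⟨e, List.append_cancel_left he⟩

lemma prefix_append_left {u t : List α} (s : List α) (h : u <+: t) : s ++ u <+: s ++ t := by
  obtain ⟨e, rfl⟩ := h
  exact ⟨e, by rw [List.append_assoc]⟩

lemma length_lt_of_proper {u t : List α} (h : u <+: t) (hne : u ≠ t) :
    u.length < t.length :=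
  lt_of_le_of_ne h.length_le (fun he => hne (h.eq_of_length he))

/-- Any "minimal gap" ending at a `Kmc` trace has length at most `n`, the upper
bound of `NmcmcSet`. -/
lemma gapBound {Suc : Set α} {LG K : Set (List α)} {n : ℕ}
    (hub : ∀ m ∈ NmcmcSet K LG Suc, m ≤ n)
    {s t : List α} (hst : s ++ t ∈ Kmc K LG Suc)
    (hmid : ∀ v, v <+: t → v ≠ [] → v ≠ t → s ++ v ∉ Kmc K LG Suc) :
    t.length ≤ n := by
  classical
  set P : ℕ → Prop := fun m => s.take m ∈ Kmc K LG Suc ∪ {([] : List α)} with hP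
  have hP0 : P 0 := by simp [hP]
  set m := Nat.findGreatest P s.length with hm
  have hPm : P m := Nat.findGreatest_spec (Nat.zero_le _) hP0
  have hmle : m ≤ s.length := Nat.findGreatest_le s.length
  have hmax : ∀ k, m < k → k ≤ s.length → s.take k ∉ Kmc K LG Suc := by
    intro k h1 h2 hk
    exact Nat.findGreatest_is_greatest h1 h2 (Or.inl hk)
  have hmem : (s.drop m ++ t).length ∈ NmcmcSet K LG Suc := by
    refine ⟨s.drop m ++ t, rfl, s.take m, hPm, ?_, ?_⟩
    · rw [← List.append_assoc, List.take_append_drop]; exact hst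
    · intro v hv hvne hvnet hvmem
      have hq3 : s.take m ++ v <+: s ++ t := by
        have h4 := prefix_append_left (s.take m) hv
        rwa [← List.append_assoc, List.take_append_drop] at h4
      have hlq : (s.take m ++ v).length = m + v.length := by
        rw [List.length_append, List.length_take, Nat.min_eq_left hmle]
      by_cases hle : (s.take m ++ v).length ≤ s.length
      · have hqs : s.take m ++ v <+: s :=
          List.prefix_of_prefix_length_le hq3 (List.prefix_append s t) hle
        have heq : s.take m ++ v = s.take ((s.take m ++ v).length) :=
          List.prefix_iff_eq_take.mp hqs
        refine hmax _ ?_ hle (by rw [← heq]; exact hvmem)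
        have hpos : 0 < v.length := List.length_pos_iff.mpr hvne
        omega
      · push_neg at hle
        have hsq : s <+: s.take m ++ v :=
          List.prefix_of_prefix_length_le (List.prefix_append s t) hq3 (le_of_lt hle)
        obtain ⟨v', hv'⟩ := hsq
        have hv't : v' <+: t := prefix_cancel (s := s) (by rw [hv']; exact hq3)
        have hlen' : s.length + v'.length = m + v.length := by
          have h5 := congrArg List.length hv'
          rwa [List.length_append, hlq] at h5
        have hdropt : (s.drop m ++ t).length = (s.length - m) + t.length := by
          simp [List.length_append]
        have hv'ne : v' ≠ [] := by
          intro h6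
          rw [h6] at hlen'
          simp at hlen'
          omega
        have hv'net : v' ≠ t := by
          intro h6
          have h7 : v.length < (s.drop m ++ t).length := length_lt_of_proper hv hvnet
          rw [h6] at hlen'
          omega
        exact hmid v' hv't hv'ne hv'net (by rw [hv']; exact hvmem)
  have hfin := hub _ hmem
  have h2 : t.length ≤ (s.drop m ++ t).length := by simp [List.length_append]
  omega

end LLPAux

/-- Case II, conservative attitude. If `pr(K) = pr(K_mc)`, there
is no starting error, and `N ≥ N_mcmc + 1`, then `L(G, γ^N_cons) = pr(K↑)`. -/
theorem cons_valid_caseII {α : Type*} [Fintype α]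
    (Sc Suc : Set α) (hpart : Sc ∪ Suc = Set.univ) (hdisj : Disjoint Sc Suc)
    (LG Lm K : Set (List α)) (hLG : LG = prCl Lm)
    (hKm : K ⊆ Lm) (hKcl : K = prCl K ∩ Lm)
    (hKmc : prCl K = prCl (Kmc K LG Suc))
    (N : ℕ)
    (hstart : fCons K LG Suc N ([] : List α) ≠ ∅)
    (h : ∃ n, IsGreatest (NmcmcSet K LG Suc) n ∧ n + 1 ≤ N) :
    loopLang LG (γCons K LG Suc N) = prCl (supC K LG Suc) := by
  classical
  obtain ⟨n, hgr, hn1⟩ := h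
  have hub : ∀ m ∈ NmcmcSet K LG Suc, m ≤ n := fun m hm => hgr.2 hm
  set Ksup := supC K LG Suc with hKsupdef
  have hKsub : Ksup ⊆ K := supC_subset
  have hctrb : ctrb Ksup LG Suc := supC_ctrb
  have hKLG : K ⊆ LG := fun z hz => by rw [hLG]; exact mem_prCl_self (hKm hz)
  -- Lemma A: a trace that sees no `Kmc` point since `x` is at most `n` longer than `x`.
  have bound : ∀ x y : List α, x <+: y → y ∈ prCl (Kmc K LG Suc) →
      (∀ p, x <+: p → p <+: y → p ∉ Kmc K LG Suc) → y.length ≤ x.length + n := by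
    intro x y hxy hy hNo
    obtain ⟨z, hz, hyz⟩ := hy
    obtain ⟨r0, hr0⟩ := hyz
    have hS : {r : List α | y ++ r ∈ Kmc K LG Suc}.Nonempty := ⟨r0, by simp only [Set.mem_setOf_eq, hr0]; exact hz⟩
    obtain ⟨r, hrS, hrmin⟩ := exists_minLen hS
    obtain ⟨u, rfl⟩ := hxy
    have hgap : (u ++ r).length ≤ n := by
      apply gapBound hub (t := u ++ r) (by rw [← List.append_assoc]; exact hrS)
      intro v hv hvne hvnet hvmem
      by_cases hle : v.length ≤ u.length
      · have hvu : v <+: u :=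
          List.prefix_of_prefix_length_le hv (List.prefix_append u r) hle
        exact hNo (x ++ v) (List.prefix_append x v) (prefix_append_left x hvu) hvmem
      · push_neg at hle
        have huv : u <+: v :=
          List.prefix_of_prefix_length_le (List.prefix_append u r) hv (le_of_lt hle)
        obtain ⟨r', rfl⟩ := huv
        have hr'r : r' <+: r := prefix_cancel (s := u) hv
        have hmem' : (x ++ u) ++ r' ∈ Kmc K LG Suc := by
          rw [List.append_assoc]; exact hvmem
        have hminr := hrmin r' hmem'
        have hlt : (u ++ r').length < (u ++ r).length := length_lt_of_proper hv hvnet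
        simp [List.length_append] at hlt
        omega
    simp only [List.length_append] at hgap ⊢
    omega
  -- Reachability of `Kmc` points within `prCl Ksup`.
  have reach : ∀ x ∈ prCl Ksup, ∃ r, x ++ r ∈ Kmc K LG Suc ∧ x ++ r ∈ prCl Ksup := by
    intro x hx
    by_contra hno
    push_neg at hno
    have hNoK : ∀ p, p ∈ prCl Ksup → x <+: p → p ∉ Kmc K LG Suc := by
      intro p hp hxp hpm
      obtain ⟨r, rfl⟩ := hxp
      exact hno r hpm hp
    have chain : ∀ k : ℕ, ∃ y, y ∈ Ksup ∧ x <+: y ∧ k ≤ y.length := by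
      intro k
      induction k with
      | zero =>
        obtain ⟨y, hy, hxy⟩ := hx
        exact ⟨y, hy, hxy, Nat.zero_le _⟩
      | succ k ih =>
        obtain ⟨y, hy, hxy, hk⟩ := ih
        have hyK : y ∈ K := hKsub hy
        have hyLG : y ∈ LG := hKLG hyK
        have hynm : y ∉ Kmc K LG Suc := hNoK y (mem_prCl_self hy) hxy
        have hex : ∃ σ ∈ Suc, y ++ [σ] ∈ LG := by
          by_contra hc2
          push_neg at hc2
          exact hynm ⟨hyK, hyLG, hc2⟩
        obtain ⟨σ, hσ, hyσ⟩ := hex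
        have h3 : y ++ [σ] ∈ prCl Ksup := hctrb y (mem_prCl_self hy) σ hσ hyσ
        obtain ⟨y', hy', hp⟩ := h3
        refine ⟨y', hy', hxy.trans ((List.prefix_append y [σ]).trans hp), ?_⟩
        have h4 := hp.length_le
        simp [List.length_append] at h4
        omega
    obtain ⟨y, hy, hxy, hk⟩ := chain (x.length + n + 1)
    have hyKmc : y ∈ prCl (Kmc K LG Suc) := by
      have h5 : y ∈ prCl K := mem_prCl_self (hKsub hy)
      rwa [hKmc] at h5
    have h6 := bound x y hxy hyKmc
      (fun p hxp hpy => hNoK p (prCl_prefix (mem_prCl_self hy) hpy) hxp)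
    omega
  -- First-passage version of reachability.
  have reachFirst : ∀ x ∈ prCl Ksup, ∃ r, x ++ r ∈ Kmc K LG Suc ∧ x ++ r ∈ prCl Ksup ∧
      ∀ r', r' <+: r → r' ≠ r → x ++ r' ∉ Kmc K LG Suc := by
    intro x hx
    have hS : {r | x ++ r ∈ Kmc K LG Suc ∧ x ++ r ∈ prCl Ksup}.Nonempty := by
      obtain ⟨r, h1, h2⟩ := reach x hx
      exact ⟨r, h1, h2⟩
    obtain ⟨r, ⟨hr1, hr2⟩, hmin⟩ := exists_minLen hS
    refine ⟨r, hr1, hr2, fun r' hp hne hmem => ?_⟩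
    have h1 : x ++ r' ∈ prCl Ksup := prCl_prefix hr2 (prefix_append_left x hp)
    have h2 := hmin r' ⟨hmem, h1⟩
    have h3 := length_lt_of_proper hp hne
    omega
  -- Key enabling lemma: along `prCl Ksup` the conservative decision enables each next event.
  have enab : ∀ s σ, s ∈ prCl Ksup → s ++ [σ] ∈ prCl Ksup →
      [σ] ∈ prCl (fCons K LG Suc N s) := by
    intro s σ hs hsσ
    set M : Set (List α) := {t | s ++ t ∈ Kmc K LG Suc ∧ s ++ t ∈ prCl Ksup ∧
      ∀ v, v <+: t → v ≠ [] → v ≠ t → s ++ v ∉ Kmc K LG Suc} with hMdef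
    have hMsub : M ⊆ truncL (postL K s) (N - 1) := by
      intro t ht
      refine ⟨ht.1.1, ?_⟩
      have h1 := gapBound hub ht.1 ht.2.2
      omega
    have hMctrb : ctrb M (truncL (postL LG s) N) Suc := by
      rintro u ⟨t, ht, hut⟩ σ' hσ' huσ
      have hsuσ : (s ++ u) ++ [σ'] ∈ LG := by
        have h1 : s ++ (u ++ [σ']) ∈ LG := huσ.1
        rwa [← List.append_assoc] at h1
      have hsu : s ++ u ∈ prCl Ksup := prCl_prefix ht.2.1 (prefix_append_left s hut)
      have hune : u ≠ t := by
        intro h1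
        rw [h1] at hsuσ
        exact ht.1.2.2 σ' hσ' hsuσ
      have hx : (s ++ u) ++ [σ'] ∈ prCl Ksup := hctrb _ hsu σ' hσ' hsuσ
      obtain ⟨r, hr1, hr2, hrmin⟩ := reachFirst _ hx
      have hass : s ++ ((u ++ [σ']) ++ r) = ((s ++ u) ++ [σ']) ++ r := by
        simp [List.append_assoc]
      refine ⟨(u ++ [σ']) ++ r, ⟨?_, ?_, ?_⟩, List.prefix_append _ r⟩
      · rw [hass]; exact hr1
      · rw [hass]; exact hr2
      · intro v hv hvne hvnet
        by_cases hle : v.length ≤ u.length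
        · have hvu : v <+: u := List.prefix_of_prefix_length_le hv
            ((List.prefix_append u [σ']).trans (List.prefix_append (u ++ [σ']) r)) hle
          have hvnet' : v ≠ t := by
            intro h2
            have h3 := length_lt_of_proper hut hune
            rw [h2] at hle
            omega
          exact ht.2.2 v (hvu.trans hut) hvne hvnet'
        · push_neg at hle
          have huσv : u ++ [σ'] <+: v := List.prefix_of_prefix_length_le
            (List.prefix_append (u ++ [σ']) r) hv
            (by simp [List.length_append]; omega)
          obtain ⟨r', rfl⟩ := huσv
          have hr'r : r' <+: r := prefix_cancel (s := u ++ [σ']) hv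
          have hr'ne : r' ≠ r := by
            intro h2
            exact hvnet (by rw [h2])
          intro hvmem
          have hass' : s ++ ((u ++ [σ']) ++ r') = ((s ++ u) ++ [σ']) ++ r' := by
            simp [List.append_assoc]
          rw [hass'] at hvmem
          exact hrmin r' hr'r hr'ne hvmem
    obtain ⟨r, hr1, hr2, hrmin⟩ := reachFirst _ hsσ
    have hσM : [σ] ++ r ∈ M := by
      refine ⟨?_, ?_, ?_⟩
      · rw [← List.append_assoc]; exact hr1
      · rw [← List.append_assoc]; exact hr2
      · intro v hv hvne hvnet hvmem
        have h1 : [σ] <+: v := List.prefix_of_prefix_length_le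
          (List.prefix_append [σ] r) hv
          (by
            rcases v with _ | ⟨a, l⟩
            · exact absurd rfl hvne
            · simp)
        obtain ⟨r', rfl⟩ := h1
        have h2 : r' <+: r := prefix_cancel (s := [σ]) hv
        have h3 : r' ≠ r := fun h => hvnet (by rw [h])
        rw [← List.append_assoc] at hvmem
        exact hrmin r' h2 h3 hvmem
    exact prCl_mono (subset_supC hMsub hMctrb) ⟨[σ] ++ r, hσM, List.prefix_append [σ] r⟩
  -- Invariant: the closed loop stays inside `prCl Ksup`.
  have inv : ∀ w, InLoop LG (γCons K LG Suc N) w → w ∈ prCl Ksup := by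
    intro w hw
    induction hw with
    | nil =>
      obtain ⟨t, ht⟩ := Set.nonempty_iff_ne_empty.mpr hstart
      obtain ⟨M, hM, htM⟩ := ht
      have hMK := hM.1
      have hMc := hM.2
      have hMK' : M ⊆ K := by
        intro t' ht'
        have h1 := (hMK ht').1
        simpa [postL] using h1
      have hMc' : ctrb M LG Suc := by
        intro u hu σ hσ huLG
        apply hMc u hu σ hσ
        refine ⟨by simpa [postL] using huLG, ?_⟩
        obtain ⟨t', ht', hut'⟩ := hu
        have h1 := (hMK ht').2
        have h2 := hut'.length_le
        simp only [List.length_append, List.length_cons, List.length_nil]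
        omega
      exact ⟨t, subset_supC hMK' hMc' htM, List.nil_prefix⟩
    | @snoc s σ h1 h2 h3 ih =>
      rcases h3 with hf | ⟨hσSuc, _⟩
      · obtain ⟨t, htf, hσt⟩ := hf
        obtain ⟨M, hM, htM⟩ := htf
        have hMK := hM.1
        have hMc := hM.2
        set M' : Set (List α) := Ksup ∪ ((fun t' => s ++ t') '' M) with hM'def
        have hM'K : M' ⊆ K := by
          rintro z (hz | ⟨t', ht', rfl⟩)
          · exact hKsub hz
          · exact (hMK ht').1
        have hM'c : ctrb M' LG Suc := by
          rintro w' ⟨z, hz, hwz⟩ σ' hσ' hwLG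
          have hsup : w' ∈ prCl Ksup → w' ++ [σ'] ∈ prCl M' := fun hww =>
            prCl_mono Set.subset_union_left (hctrb w' hww σ' hσ' hwLG)
          rcases hz with hz | ⟨t', ht', rfl⟩
          · exact hsup ⟨z, hz, hwz⟩
          · by_cases hlen : w'.length ≤ s.length
            · have hws : w' <+: s :=
                List.prefix_of_prefix_length_le hwz (List.prefix_append s t') hlen
              exact hsup (prCl_prefix ih hws)
            · push_neg at hlen
              have hsw : s <+: w' := List.prefix_of_prefix_length_le
                (List.prefix_append s t') hwz (le_of_lt hlen)
              obtain ⟨u, rfl⟩ := hsw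
              have hut' : u <+: t' := prefix_cancel (s := s) hwz
              have huM : u ∈ prCl M := ⟨t', ht', hut'⟩
              have huσM : u ++ [σ'] ∈ prCl M := by
                apply hMc u huM σ' hσ'
                refine ⟨show s ++ (u ++ [σ']) ∈ LG by rw [← List.append_assoc]; exact hwLG, ?_⟩
                have ha := (hMK ht').2
                have hb := hut'.length_le
                simp only [List.length_append, List.length_cons, List.length_nil]
                omega
              obtain ⟨t'', ht'', hp⟩ := huσM
              refine ⟨s ++ t'', Or.inr ⟨t'', ht'', rfl⟩, ?_⟩
              rw [List.append_assoc]
              exact prefix_append_left s hp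
        have hM'sup : M' ⊆ Ksup := subset_supC hM'K hM'c
        exact ⟨s ++ t, hM'sup (Or.inr ⟨t, htM, rfl⟩), prefix_append_left s hσt⟩
      · exact hctrb s ih σ hσSuc h2
  -- The other inclusion: every prefix of `Ksup` is generated by the closed loop.
  have covers : ∀ w, w ∈ prCl Ksup → InLoop LG (γCons K LG Suc N) w := by
    intro w
    induction w using List.reverseRecOn with
    | nil => exact fun _ => InLoop.nil
    | append_singleton s σ ih =>
      intro hw
      have hs : s ∈ prCl Ksup := prCl_prefix hw (List.prefix_append s [σ])
      have hLGm : s ++ [σ] ∈ LG := by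
        rw [hLG]
        exact prCl_mono (fun z hz => hKm (hKsub hz)) hw
      exact InLoop.snoc (ih hs) hLGm (Or.inl (enab s σ hs hw))
  ext w
  exact ⟨fun hw => inv w hw, fun hw => covers w hw⟩
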